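/- arXiv:1501.04119 — 3 statements merged into one kernel-verified Lean document; each statement's English description precedes it below -/
import Mathlib

section
/- In a near polygon, any three pairwise collinear points lie on a common line; equivalently, the collinearity graph of a near polygon contains no triangle whose three vertices are not all incident with one line. -/
structure Geometry (P : Type*) where
  lines : Set (Set P)

namespace Geometry

variable {P : Type*}

/-- A partial linear space: two distinct points lie on at most one common line. -/
def IsPLS (S : Geometry P) : Prop :=
  ∀ L₁ ∈ S.lines, ∀ L₂ ∈ S.lines, ∀ x y : P,
    x ≠ y → x ∈ L₁ → y ∈ L₁ → x ∈ L₂ → y ∈ L₂ → L₁ = L₂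

/-- The collinearity graph. -/
def coll (S : Geometry P) : SimpleGraph P where
  Adj x y := x ≠ y ∧ ∃ L ∈ S.lines, x ∈ L ∧ y ∈ L
  symm := ⟨by rintro x y ⟨h, L, hL, hx, hy⟩; exact ⟨h.symm, L, hL, hy, hx⟩⟩
  loopless := ⟨by rintro x ⟨h, -⟩; exact h rfl⟩

/-- A near polygon: connected partial linear space with the unique nearest point property. -/
def IsNearPolygon (S : Geometry P) : Prop :=
  S.IsPLS ∧ S.coll.Connected ∧
    ∀ (x : P), ∀ L ∈ S.lines,
      ∃! p, p ∈ L ∧ ∀ q ∈ L, S.coll.dist x p ≤ S.coll.dist x q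

end Geometry

/-!
If `x` were off the line `L` through `y` and `z`, then `y` and `z` would both be at distance `1`
from `x`, while no point of `L` is at distance `0`; so both would be nearest to `x` on `L`,
contradicting the uniqueness of the nearest point.
-/

namespace Geometry

variable {P : Type*} {S : Geometry P} {L : Set P} {x y z : P}

theorem dist_le_of_adj_of_notMem (hL : L ∈ S.lines) (hxL : x ∉ L) (hy : y ∈ L)
    (hxy : S.coll.Adj x y) : ∀ q ∈ L, S.coll.dist x y ≤ S.coll.dist x q := by
  intro q hq
  have hreach : S.coll.Reachable x q := by
    by_cases hqy : q = y
    · exact hqy ▸ hxy.reachable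
    · exact hxy.reachable.trans (SimpleGraph.Adj.reachable ⟨Ne.symm hqy, L, hL, hy, hq⟩)
  rw [SimpleGraph.dist_eq_one_iff_adj.mpr hxy]
  exact hreach.pos_dist_of_ne fun hxq => hxL (hxq ▸ hq)

theorem IsNearPolygon.eq_of_adj_of_adj (hS : S.IsNearPolygon) (hL : L ∈ S.lines) (hxL : x ∉ L)
    (hy : y ∈ L) (hz : z ∈ L) (hxy : S.coll.Adj x y) (hxz : S.coll.Adj x z) : y = z :=
  (hS.2.2 x L hL).unique ⟨hy, dist_le_of_adj_of_notMem hL hxL hy hxy⟩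
    ⟨hz, dist_le_of_adj_of_notMem hL hxL hz hxz⟩

end Geometry

theorem stmt1 {P : Type*} (S : Geometry P) (hS : S.IsNearPolygon)
    (x y z : P) (hxy : S.coll.Adj x y) (hyz : S.coll.Adj y z) (hxz : S.coll.Adj x z) :
    ∃ L ∈ S.lines, x ∈ L ∧ y ∈ L ∧ z ∈ L := by
  obtain ⟨hyz_ne, L, hL, hy, hz⟩ := hyz
  by_cases hxL : x ∈ L
  · exact ⟨L, hL, hxL, hy, hz⟩
  · exact absurd (hS.eq_of_adj_of_adj hL hxL hy hz hxy hxz) hyz_ne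
end

section
/- The symplectic generalized quadrangle W(2) admits no partition of its point set into ovoids. Equivalently, there do not exist three pairwise disjoint ovoids in W(2). -/
/-- The underlying vector space F₂⁴. -/
abbrev W2V := Fin 4 → ZMod 2

/-- A nondegenerate alternating bilinear form on F₂⁴. -/
def W2B (x y : W2V) : ZMod 2 := x 0 * y 1 + x 1 * y 0 + x 2 * y 3 + x 3 * y 2

/-- The points of W(2): the 15 nonzero vectors. -/
abbrev W2Pt := {v : W2V // v ≠ 0}

/-- The lines of W(2): the triples {x, y, x+y} with B(x,y) = 0, x ≠ y. -/
def W2IsLine (L : Set W2Pt) : Prop :=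
  ∃ x y : W2Pt, x.1 ≠ y.1 ∧ W2B x.1 y.1 = 0 ∧
    L = {p : W2Pt | p.1 = x.1 ∨ p.1 = y.1 ∨ p.1 = x.1 + y.1}

/-- An ovoid of W(2): pairwise non-collinear points meeting every line. -/
def W2IsOvoid (O : Set W2Pt) : Prop :=
  (∀ x ∈ O, ∀ y ∈ O, x ≠ y → W2B x.1 y.1 ≠ 0) ∧
  ∀ L : Set W2Pt, W2IsLine L → (O ∩ L).Nonempty

/-!
Two disjoint ovoids `O₁`, `O₂` would make `O₁`, `O₂` and the complement of `O₁ ∪ O₂` three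
cocliques of the collinearity graph, i.e. a proper 3-colouring: a line with two points outside
`O₁ ∪ O₂` would have to meet both ovoids in its third point.

The collinearity graph is not 3-colourable. Take a hyperbolic line `{a₁, a₂, a₃}` and its
perp `{b₁, b₂, b₃}`. Every `aᵢ` is collinear with every `bⱼ`, so a 3-colouring repeats a colour
on each of the two triples, say `c aᵢ = c aᵢ'` and `c bⱼ = c bⱼ'`. The third points `aᵢ + bⱼ`
and `aᵢ' + bⱼ'` of the lines `aᵢbⱼ` and `aᵢ'bⱼ'` then get the same colour, yet they are
collinear, as `B(aᵢ + bⱼ, aᵢ' + bⱼ') = B(aᵢ, aᵢ') + B(bⱼ, bⱼ') = 1 + 1 = 0`.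
-/

namespace SimpleGraph

variable {V : Type*} {G : SimpleGraph V}

theorem Coloring.exists_ne_eq_of_forall_adj {n : ℕ} (C : G.Coloring (Fin n)) (a : Fin n → V)
    {w : V} (hw : ∀ i, G.Adj w (a i)) : ∃ i i', i ≠ i' ∧ C (a i) = C (a i') := by
  by_contra! hinj
  have hsurj : Function.Surjective (C ∘ a) :=
    Finite.injective_iff_surjective.mp fun i i' h ↦ by_contra fun hne ↦ hinj i i' hne h
  obtain ⟨i, hi⟩ := hsurj (C w)
  exact C.valid (hw i) hi.symm

theorem Coloring.apply_eq_of_triangle {C : G.Coloring (Fin 3)} {u v w u' v' w' : V}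
    (huv : G.Adj u v) (huw : G.Adj u w) (hvw : G.Adj v w) (hu'w' : G.Adj u' w')
    (hv'w' : G.Adj v' w') (hu : C u = C u') (hv : C v = C v') : C w = C w' := by
  have third : ∀ x y z z' : Fin 3, x ≠ y → x ≠ z → y ≠ z → x ≠ z' → y ≠ z' → z = z' := by
    decide
  exact third _ _ _ _ (C.valid huv) (C.valid huw) (C.valid hvw) (hu ▸ C.valid hu'w')
    (hv ▸ C.valid hv'w')

theorem not_colorable_three_of_triangles (a b : Fin 3 → V) (g : Fin 3 → Fin 3 → V)
    (hab : ∀ i j, G.Adj (a i) (b j)) (hag : ∀ i j, G.Adj (a i) (g i j))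
    (hbg : ∀ i j, G.Adj (b j) (g i j))
    (hg : ∀ i i' j j', i ≠ i' → j ≠ j' → G.Adj (g i j) (g i' j')) : ¬ G.Colorable 3 := by
  rintro ⟨C⟩
  obtain ⟨i, i', hi, hai⟩ := C.exists_ne_eq_of_forall_adj a fun i ↦ (hab i 0).symm
  obtain ⟨j, j', hj, hbj⟩ := C.exists_ne_eq_of_forall_adj b (hab 0)
  exact C.valid (hg i i' j j' hi hj)
    (C.apply_eq_of_triangle (hab i j) (hag i j) (hbg i j) (hag i' j') (hbg i' j') hai hbj)

theorem colorable_three_of_isIndepSet {s t : Set V} (hs : G.IsIndepSet s) (ht : G.IsIndepSet t)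
    (hst : G.IsIndepSet (s ∪ t)ᶜ) : G.Colorable 3 := by
  classical
  let c : V → Fin 3 := fun v ↦ if v ∈ s then 0 else if v ∈ t then 1 else 2
  have hclass : ∀ v, (c v = 0 → v ∈ s) ∧ (c v = 1 → v ∈ t) ∧ (c v = 2 → v ∈ (s ∪ t)ᶜ) := by
    intro v
    by_cases hvs : v ∈ s <;> by_cases hvt : v ∈ t <;> simp [c, hvs, hvt]
  refine ⟨Coloring.mk c fun {v w} hvw hc ↦ ?_⟩
  have hne := G.ne_of_adj hvw
  obtain h | h | h : c v = 0 ∨ c v = 1 ∨ c v = 2 := by generalize c v = k; decide +revert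
  · exact hs ((hclass v).1 h) ((hclass w).1 (hc ▸ h)) hne hvw
  · exact ht ((hclass v).2.1 h) ((hclass w).2.1 (hc ▸ h)) hne hvw
  · exact hst ((hclass v).2.2 h) ((hclass w).2.2 (hc ▸ h)) hne hvw

end SimpleGraph

theorem W2B_comm (x y : W2V) : W2B x y = W2B y x := by
  simp only [W2B]; ring

def w2Collinear : SimpleGraph W2Pt where
  Adj p q := p ≠ q ∧ W2B p.1 q.1 = 0
  symm := ⟨fun p q h ↦ ⟨h.1.symm, W2B_comm q.1 p.1 ▸ h.2⟩⟩
  loopless := ⟨fun _ h ↦ h.1 rfl⟩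

theorem w2Collinear_adj_iff {p q : W2Pt} :
    w2Collinear.Adj p q ↔ p.1 ≠ q.1 ∧ W2B p.1 q.1 = 0 := by
  simp [w2Collinear, Subtype.ext_iff]

theorem w2Collinear_not_colorable_three : ¬ w2Collinear.Colorable 3 := by
  let a : Fin 3 → W2V := ![![1, 0, 0, 0], ![0, 1, 0, 0], ![1, 1, 0, 0]]
  let b : Fin 3 → W2V := ![![0, 0, 1, 0], ![0, 0, 0, 1], ![0, 0, 1, 1]]
  have ha : ∀ i, a i ≠ 0 := by decide
  have hb : ∀ j, b j ≠ 0 := by decide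
  have hg : ∀ i j, a i + b j ≠ 0 := by decide
  apply SimpleGraph.not_colorable_three_of_triangles (fun i ↦ ⟨a i, ha i⟩)
    (fun j ↦ ⟨b j, hb j⟩) (fun i j ↦ ⟨a i + b j, hg i j⟩) <;>
  simp only [w2Collinear_adj_iff] <;> decide

theorem W2IsOvoid.isIndepSet {O : Set W2Pt} (hO : W2IsOvoid O) : w2Collinear.IsIndepSet O :=
  fun _ hp _ hq hpq hadj ↦ hO.1 _ hp _ hq hpq (w2Collinear_adj_iff.mp hadj).2

theorem W2IsOvoid.exists_mem_line {O : Set W2Pt} (hO : W2IsOvoid O) {p q : W2Pt}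
    (hpq : w2Collinear.Adj p q) : ∃ r ∈ O, r = p ∨ r = q ∨ r.1 = p.1 + q.1 := by
  obtain ⟨hne, hB⟩ := w2Collinear_adj_iff.mp hpq
  obtain ⟨r, hrO, hr⟩ := hO.2 _ ⟨p, q, hne, hB, rfl⟩
  exact ⟨r, hrO, by simpa only [Set.mem_ofPred_eq, Subtype.ext_iff] using hr⟩

theorem W2IsOvoid.isIndepSet_compl_union {O₁ O₂ : Set W2Pt} (h₁ : W2IsOvoid O₁)
    (h₂ : W2IsOvoid O₂) (hd : Disjoint O₁ O₂) : w2Collinear.IsIndepSet (O₁ ∪ O₂)ᶜ := by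
  intro p hp q hq _ hpq
  simp only [Set.mem_compl_iff, Set.mem_union, not_or] at hp hq
  obtain ⟨r₁, hr₁, rfl | rfl | hr₁'⟩ := h₁.exists_mem_line hpq
  · exact hp.1 hr₁
  · exact hq.1 hr₁
  obtain ⟨r₂, hr₂, rfl | rfl | hr₂'⟩ := h₂.exists_mem_line hpq
  · exact hp.2 hr₂
  · exact hq.2 hr₂
  exact Set.disjoint_left.mp hd hr₁ (Subtype.ext (hr₁'.trans hr₂'.symm) ▸ hr₂)

theorem W2IsOvoid.not_disjoint {O₁ O₂ : Set W2Pt} (h₁ : W2IsOvoid O₁) (h₂ : W2IsOvoid O₂) :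
    ¬ Disjoint O₁ O₂ := fun hd ↦
  w2Collinear_not_colorable_three <| SimpleGraph.colorable_three_of_isIndepSet h₁.isIndepSet
    h₂.isIndepSet (h₁.isIndepSet_compl_union h₂ hd)

theorem stmt6 :
    (¬ ∃ O₁ O₂ O₃ : Set W2Pt, W2IsOvoid O₁ ∧ W2IsOvoid O₂ ∧ W2IsOvoid O₃ ∧
        Disjoint O₁ O₂ ∧ Disjoint O₁ O₃ ∧ Disjoint O₂ O₃ ∧
        O₁ ∪ O₂ ∪ O₃ = Set.univ) ∧
    (¬ ∃ O₁ O₂ O₃ : Set W2Pt, W2IsOvoid O₁ ∧ W2IsOvoid O₂ ∧ W2IsOvoid O₃ ∧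
        Disjoint O₁ O₂ ∧ Disjoint O₁ O₃ ∧ Disjoint O₂ O₃) := by
  constructor
  · rintro ⟨O₁, O₂, -, h₁, h₂, -, hd, -⟩
    exact h₁.not_disjoint h₂ hd
  · rintro ⟨O₁, O₂, -, h₁, h₂, -, hd, -⟩
    exact h₁.not_disjoint h₂ hd
end

section
/- Let S be a near polygon and let H be a full subgeometry of S that is isometrically embedded in S (distances between points of H are the same computed in H and in S), such that H itself is a near polygon. For a point x of S, let m = min over points y of H of d_S(x,y), and define f_x(y) = d_S(x,y) - m for every point y of H. Then f_x is a valuation of H, i.e., f_x attains the value 0 and every line of H contains a unique point on which f_x attains its minimum over that line, with all other points of the line having value one more. -/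
/-- The collinearity graph of the subgeometry on a set of points with a given line set. -/
def subGraph {P : Type*} (HP : Set P) (Hlines : Set (Set P)) : SimpleGraph ↥HP where
  Adj a b := (a : P) ≠ (b : P) ∧ ∃ L ∈ Hlines, (a : P) ∈ L ∧ (b : P) ∈ L
  symm := ⟨by rintro a b ⟨h, L, hL, ha, hb⟩; exact ⟨h.symm, L, hL, hb, ha⟩⟩
  loopless := ⟨by rintro a ⟨h, -⟩; exact h rfl⟩

/-!
A line `L` of `H` is a line of `S`, so by the near polygon property of `S` it has a unique point
`p` nearest to `x`; every other point of `L` is collinear with `p`, hence lies at distance exactly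
`d(x, p) + 1` from `x`. Subtracting the minimum `m` preserves this pattern, since `m` is a lower
bound for the distances from `x` to points of `H` (so truncated subtraction in `ℕ` does no harm).
-/

namespace Geometry

variable {P : Type*} {S : Geometry P}

theorem dist_le_dist_add_one_of_mem_line (hconn : S.coll.Connected) (x : P) {L : Set P}
    (hL : L ∈ S.lines) {p q : P} (hp : p ∈ L) (hq : q ∈ L) :
    S.coll.dist x q ≤ S.coll.dist x p + 1 := by
  obtain rfl | hpq := eq_or_ne p q
  · omega
  have hadj : S.coll.dist p q = 1 := SimpleGraph.dist_eq_one_iff_adj.mpr ⟨hpq, L, hL, hp, hq⟩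
  have := hconn.dist_triangle (u := x) (v := p) (w := q)
  omega

theorem IsNearPolygon.existsUnique_dist_eq_succ (hS : S.IsNearPolygon) (x : P) {L : Set P}
    (hL : L ∈ S.lines) :
    ∃! p, p ∈ L ∧ ∀ q ∈ L, q ≠ p → S.coll.dist x q = S.coll.dist x p + 1 := by
  obtain ⟨-, hconn, hnearest⟩ := hS
  obtain ⟨p, ⟨hpL, hpmin⟩, hpuniq⟩ := hnearest x L hL
  have hsucc : ∀ q ∈ L, q ≠ p → S.coll.dist x q = S.coll.dist x p + 1 := by
    intro q hq hqp
    have hupper := dist_le_dist_add_one_of_mem_line hconn x hL hpL hq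
    have hne : S.coll.dist x p ≠ S.coll.dist x q := fun heq =>
      hqp (hpuniq q ⟨hq, fun r hr => heq ▸ hpmin r hr⟩)
    have := hpmin q hq
    omega
  refine ⟨p, ⟨hpL, hsucc⟩, fun p' ⟨hp'L, hp'⟩ => by_contra fun hne => ?_⟩
  have h₁ := hp' p hpL (Ne.symm hne)
  have h₂ := hsucc p' hp'L hne
  omega

end Geometry

theorem stmt11_general {P : Type*} (S : Geometry P) (hS : S.IsNearPolygon)
    (HP : Set P) (Hlines : Set (Set P))
    (hsub : Hlines ⊆ S.lines) (hfull : ∀ L ∈ Hlines, L ⊆ HP)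
    (x : P) (m : ℕ)
    (hm_le : ∀ y ∈ HP, m ≤ S.coll.dist x y)
    (hm_att : ∃ y ∈ HP, S.coll.dist x y = m) :
    (∃ y ∈ HP, S.coll.dist x y - m = 0) ∧
      ∀ L ∈ Hlines, ∃! p, p ∈ L ∧
        ∀ q ∈ L, q ≠ p → S.coll.dist x q - m = (S.coll.dist x p - m) + 1 := by
  refine ⟨?_, fun L hL => ?_⟩
  · obtain ⟨y, hy, hdist⟩ := hm_att
    exact ⟨y, hy, by omega⟩
  have hmL : ∀ q ∈ L, m ≤ S.coll.dist x q := fun q hq => hm_le q (hfull L hL hq)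
  refine existsUnique_congr (fun p => and_congr_right fun hp => ?_) |>.mpr
    (hS.existsUnique_dist_eq_succ x (hsub hL))
  refine forall₂_congr fun q hq => imp_congr_right fun _ => ?_
  have := hmL p hp
  have := hmL q hq
  omega

theorem stmt11 {P : Type*} (S : Geometry P) (hS : S.IsNearPolygon)
    (HP : Set P) (Hlines : Set (Set P))
    (hsub : Hlines ⊆ S.lines) (hfull : ∀ L ∈ Hlines, L ⊆ HP)
    (hconn : (subGraph HP Hlines).Connected)
    (hHnp : ∀ (a : ↥HP), ∀ L ∈ Hlines, ∃! p : ↥HP, (p : P) ∈ L ∧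
      ∀ q : ↥HP, (q : P) ∈ L →
        (subGraph HP Hlines).dist a p ≤ (subGraph HP Hlines).dist a q)
    (hiso : ∀ a b : ↥HP, (subGraph HP Hlines).dist a b = S.coll.dist (a : P) (b : P))
    (x : P) (m : ℕ)
    (hm_le : ∀ y ∈ HP, m ≤ S.coll.dist x y)
    (hm_att : ∃ y ∈ HP, S.coll.dist x y = m) :
    (∃ y ∈ HP, S.coll.dist x y - m = 0) ∧
      ∀ L ∈ Hlines, ∃! p, p ∈ L ∧
        ∀ q ∈ L, q ≠ p → S.coll.dist x q - m = (S.coll.dist x p - m) + 1 :=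
  stmt11_general S hS HP Hlines hsub hfull x m hm_le hm_att
end
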